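/- arXiv:2405.00480 — 3 statements merged into one kernel-verified Lean document; each statement's English description precedes it below -/
import Mathlib

section
/- Let (M,w_d) be a finite pointed model, k ≥ 0, and let M↾k be the restriction of M to worlds of depth at most k. Then for every world w of M↾k, (M↾k, w) is (k − d(w))-bisimilar to (M, w). -/
/-- A finite pointed Kripke model with modality indices `I` and atoms `P`. -/
structure PModel (I P : Type) where
  W : Type
  fin : Finite W
  R : I → W → W → Prop
  V : P → W → Prop
  d : W

variable {I P : Type}

/-- `h`-bisimilarity between worlds of two models (back-and-forth to depth `h`). -/
def Bisim (M N : PModel I P) : ℕ → M.W → N.W → Prop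
  | 0, w, v => ∀ p, M.V p w ↔ N.V p v
  | h+1, w, v => (∀ p, M.V p w ↔ N.V p v)
      ∧ (∀ i w', M.R i w w' → ∃ v', N.R i v v' ∧ Bisim M N h w' v')
      ∧ (∀ i v', N.R i v v' → ∃ w', M.R i w w' ∧ Bisim M N h w' v')

/-- `k`-bisimilarity of pointed models. -/
def PBisim (k : ℕ) (M N : PModel I P) : Prop := Bisim M N k M.d N.d

/-- Directed paths of length `n`. -/
def Steps (M : PModel I P) : ℕ → M.W → M.W → Prop
  | 0, w, v => w = v
  | n+1, w, v => ∃ u i, M.R i w u ∧ Steps M n u v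

/-- Depth of a world: length of a shortest path from the designated world (`⊤` if none). -/
noncomputable def depth (M : PModel I P) (w : M.W) : ℕ∞ :=
  sInf {n : ℕ∞ | ∃ m : ℕ, n = (m : ℕ∞) ∧ Steps M m M.d w}

/-- Bound `b(w) = k − d(w)`, with `⊥` for unreachable worlds. -/
noncomputable def bound (k : ℕ) (M : PModel I P) (w : M.W) : WithBot ℤ :=
  ENat.recTopCoe (⊥ : WithBot ℤ) (fun n : ℕ => (((k : ℤ) - n : ℤ) : WithBot ℤ)) (depth M w)

/-- The bound as a natural number (meaningful when `0 ≤ bound k M w`). -/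
noncomputable def nbound (k : ℕ) (M : PModel I P) (w : M.W) : ℕ :=
  k - (depth M w).toNat
lemma depth_d (M : PModel I P) : depth M M.d = 0 := by
  have h0 : (0 : ℕ∞) ∈ {n : ℕ∞ | ∃ m : ℕ, n = (m : ℕ∞) ∧ Steps M m M.d M.d} :=
    ⟨0, by simp, rfl⟩
  have := sInf_le h0
  simpa [depth, le_zero_iff] using this


/-- The restriction `M↾k` of `M` to the worlds of depth at most `k`. -/
noncomputable def restrict (k : ℕ) (M : PModel I P) : PModel I P where
  W := {w : M.W // depth M w ≤ (k : ℕ∞)}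
  fin := by have := M.fin; exact Subtype.finite
  R := fun i w v => M.R i w.1 v.1
  V := fun p w => M.V p w.1
  d := ⟨M.d, by rw [depth_d]; exact zero_le⟩

/-
One step along the accessibility relation raises the depth by at most one. Hence a
world of depth `d` with `n + d ≤ k` has all its successors of depth `≤ d + 1 ≤ k`, so they all
survive in `M↾k`, and the back-and-forth game can be played for `n` rounds by answering every
move with the same world. Induction on `n` with the invariant `n + d(w) ≤ k`.
-/

lemma Steps.snoc {M : PModel I P} {i : I} :
    ∀ {m : ℕ} {a b c : M.W}, Steps M m a b → M.R i b c → Steps M (m + 1) a c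
  | 0, _, _, _, rfl, hr => ⟨_, i, hr, rfl⟩
  | _ + 1, _, _, _, ⟨u, j, hj, hs⟩, hr => ⟨u, j, hj, hs.snoc hr⟩

lemma depth_le_of_steps {M : PModel I P} {m : ℕ} {w : M.W} (h : Steps M m M.d w) :
    depth M w ≤ m :=
  sInf_le ⟨m, rfl, h⟩

lemma exists_steps_depth {M : PModel I P} {w : M.W} (hw : depth M w ≠ ⊤) :
    ∃ m : ℕ, depth M w = m ∧ Steps M m M.d w := by
  have hne : {n : ℕ∞ | ∃ m : ℕ, n = m ∧ Steps M m M.d w}.Nonempty := by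
    by_contra hempty
    exact hw (by simp [depth, Set.not_nonempty_iff_eq_empty.mp hempty])
  exact csInf_mem hne

lemma depth_le_depth_add_one_of_rel {M : PModel I P} {i : I} {u v : M.W} (h : M.R i u v) :
    depth M v ≤ depth M u + 1 := by
  by_cases hu : depth M u = ⊤
  · simp [hu]
  obtain ⟨m, hm, hs⟩ := exists_steps_depth hu
  rw [hm]
  exact_mod_cast depth_le_of_steps (hs.snoc h)

lemma add_depth_le_of_rel {M : PModel I P} {i : I} {u v : M.W} {n : ℕ} {b : ℕ∞}
    (h : M.R i u v) (hu : ((n + 1 : ℕ) : ℕ∞) + depth M u ≤ b) : (n : ℕ∞) + depth M v ≤ b :=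
  calc (n : ℕ∞) + depth M v ≤ n + (depth M u + 1) := by
        gcongr; exact depth_le_depth_add_one_of_rel h
    _ = ((n + 1 : ℕ) : ℕ∞) + depth M u := by push_cast; ring
    _ ≤ b := hu

lemma bisim_restrict_of_add_depth_le (k : ℕ) (M : PModel I P) :
    ∀ (n : ℕ) (w : (restrict k M).W), (n : ℕ∞) + depth M w.1 ≤ k →
      Bisim (restrict k M) M n w w.1
  | 0, _, _ => fun _ => Iff.rfl
  | n + 1, w, hw => by
    refine ⟨fun _ => Iff.rfl, fun i w' hr => ⟨w'.1, hr, ?_⟩, fun i v hr => ?_⟩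
    · exact bisim_restrict_of_add_depth_le k M n w' (add_depth_le_of_rel hr hw)
    · have hv := add_depth_le_of_rel hr hw
      exact ⟨⟨v, le_add_self.trans hv⟩, hr, bisim_restrict_of_add_depth_le k M n _ hv⟩

/-- Every world `w` of `M↾k` is `(k − d(w))`-bisimilar to `w` in `M`. -/
theorem restrict_bisim (k : ℕ) (M : PModel I P) (w : (restrict k M).W) :
    Bisim (restrict k M) M (k - (depth M w.1).toNat) w w.1 := by
  have hwk : depth M w.1 ≤ k := w.2
  obtain ⟨m, hm⟩ := ENat.ne_top_iff_exists.mp (ne_top_of_le_ne_top (ENat.natCast_ne_top k) hwk)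
  rw [← hm] at hwk
  have hmk : m ≤ k := by exact_mod_cast hwk
  apply bisim_restrict_of_add_depth_le
  rw [← hm, ENat.toNat_natCast]
  exact_mod_cast (Nat.sub_add_cancel hmk).le
end

section
/- If w and v are both maximal representatives of a finite pointed model and w ∼_{b(w)} v, then b(w) = b(v). -/
variable {I P : Type}

/-- `x` represents `y` : `b(x) ≥ b(y) ≥ 0` and `x ∼_{b(y)} y`. -/
noncomputable def Repr' (k : ℕ) (M : PModel I P) (x y : M.W) : Prop :=
  0 ≤ bound k M y ∧ bound k M y ≤ bound k M x ∧ Bisim M M (nbound k M y) x y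

/-- `x` strictly represents `y`. -/
noncomputable def SRepr (k : ℕ) (M : PModel I P) (x y : M.W) : Prop :=
  Repr' k M x y ∧ bound k M y < bound k M x

/-- Maximal representatives. -/
noncomputable def maxRepr (k : ℕ) (M : PModel I P) : Set M.W :=
  {x | 0 ≤ bound k M x ∧ ∀ y, ¬ SRepr k M y x}

/-- Representative class `[x]_{b(x)}`. -/
noncomputable def reprClass (k : ℕ) (M : PModel I P) (x : M.W) : Set M.W :=
  {y | Bisim M M (nbound k M x) x y}

namespace Bisim

variable {M N : PModel I P}

theorem symm : ∀ {n : ℕ} {w : M.W} {v : N.W}, Bisim M N n w v → Bisim N M n v w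
  | 0, _, _, h => fun p => (h p).symm
  | _ + 1, _, _, ⟨hV, hforth, hback⟩ =>
    ⟨fun p => (hV p).symm,
      fun i v' hv' => (hback i v' hv').imp fun _ ⟨hw', hb⟩ => ⟨hw', hb.symm⟩,
      fun i w' hw' => (hforth i w' hw').imp fun _ ⟨hv', hb⟩ => ⟨hv', hb.symm⟩⟩

theorem mono : ∀ {n m : ℕ} {w : M.W} {v : N.W}, m ≤ n → Bisim M N n w v → Bisim M N m w v
  | 0, 0, _, _, _, h => h
  | _ + 1, 0, _, _, _, h => h.1
  | _ + 1, _ + 1, _, _, hmn, ⟨hV, hforth, hback⟩ =>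
    ⟨hV,
      fun i w' hw' => (hforth i w' hw').imp fun _ ⟨hv', hb⟩ => ⟨hv', hb.mono (by omega)⟩,
      fun i v' hv' => (hback i v' hv').imp fun _ ⟨hw', hb⟩ => ⟨hw', hb.mono (by omega)⟩⟩

end Bisim

variable {k : ℕ} {M : PModel I P}

theorem bound_eq_nbound {w : M.W} (hw : 0 ≤ bound k M w) :
    bound k M w = ((nbound k M w : ℤ) : WithBot ℤ) := by
  unfold bound at hw ⊢
  unfold nbound
  generalize depth M w = d at hw ⊢
  cases d using ENat.recTopCoe with
  | top => simp at hw
  | coe n =>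
    simp only [ENat.recTopCoe_natCast, ENat.toNat_natCast] at hw ⊢
    have hnk : n ≤ k := by have := WithBot.coe_nonneg.mp hw; omega
    push_cast [hnk]
    rfl

theorem nbound_le_nbound {x y : M.W} (hx : 0 ≤ bound k M x) (hxy : bound k M x ≤ bound k M y) :
    nbound k M x ≤ nbound k M y := by
  have hy := hx.trans hxy
  rw [bound_eq_nbound hx, bound_eq_nbound hy] at hxy
  exact_mod_cast hxy

theorem sRepr_of_bisim {x y : M.W} {n : ℕ} (hy : 0 ≤ bound k M y) (hlt : bound k M y < bound k M x)
    (hn : nbound k M y ≤ n) (hxy : Bisim M M n x y) : SRepr k M x y :=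
  ⟨⟨hy, hlt.le, hxy.mono hn⟩, hlt⟩

/-- Maximal representatives that are `b(w)`-bisimilar have equal bounds. -/
theorem maxRepr_bound_eq (k : ℕ) (M : PModel I P) (w v : M.W)
    (hw : w ∈ maxRepr k M) (hv : v ∈ maxRepr k M)
    (hbis : Bisim M M (nbound k M w) w v) :
    bound k M w = bound k M v := by
  obtain ⟨hw0, hw_max⟩ := hw
  obtain ⟨hv0, hv_max⟩ := hv
  rcases lt_trichotomy (bound k M w) (bound k M v) with hlt | heq | hgt
  · exact absurd (sRepr_of_bisim hw0 hlt le_rfl hbis.symm) (hw_max v)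
  · exact heq
  · exact absurd (sRepr_of_bisim hv0 hgt (nbound_le_nbound hv0 hgt.le) hbis) (hv_max w)
end

section
/- If x ∈ W, x' ∈ maxRepr(W), x ∼_h x' and b(x) ≥ h (for some h ≤ k), then b(x') ≥ h. -/
variable {I P : Type}

theorem Bisim.mono_s11 {M N : PModel I P} {h m : ℕ} (hm : m ≤ h) {w : M.W} {v : N.W}
    (hb : Bisim M N h w v) : Bisim M N m w v := by
  induction h generalizing m w v with
  | zero => rwa [Nat.le_zero.mp hm]
  | succ n ih =>
    cases m with
    | zero => exact hb.1
    | succ m =>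
      have hm : m ≤ n := Nat.succ_le_succ_iff.mp hm
      refine ⟨hb.1, fun i w' hr => ?_, fun i v' hr => ?_⟩
      · obtain ⟨v', hr', hb'⟩ := hb.2.1 i w' hr
        exact ⟨v', hr', ih hm hb'⟩
      · obtain ⟨w', hr', hb'⟩ := hb.2.2 i v' hr
        exact ⟨w', hr', ih hm hb'⟩

theorem bound_eq_nbound_of_nonneg {k : ℕ} {M : PModel I P} {w : M.W}
    (hw : 0 ≤ bound k M w) : bound k M w = ((nbound k M w : ℤ) : WithBot ℤ) := by
  unfold bound nbound at *
  cases hd : depth M w with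
  | top => simp [hd] at hw
  | coe n =>
    simp only [hd, ENat.recTopCoe_natCast, ENat.toNat_natCast] at hw ⊢
    have hn : n ≤ k := by have := WithBot.coe_nonneg.mp hw; omega
    push_cast [hn]
    rfl

theorem nbound_le_of_bound_lt {k h : ℕ} {M : PModel I P} {w : M.W}
    (hw : 0 ≤ bound k M w) (hlt : bound k M w < ((h : ℤ) : WithBot ℤ)) : nbound k M w ≤ h := by
  rw [bound_eq_nbound_of_nonneg hw, WithBot.coe_lt_coe] at hlt
  omega

theorem maxRepr_bound_ge_general (k h : ℕ) (M : PModel I P) (x x' : M.W)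
    (hx' : x' ∈ maxRepr k M) (hbis : Bisim M M h x x')
    (hb : ((h : ℤ) : WithBot ℤ) ≤ bound k M x) :
    ((h : ℤ) : WithBot ℤ) ≤ bound k M x' := by
  by_contra! hlt
  obtain ⟨hx0, hmax⟩ := hx'
  have hlt_x : bound k M x' < bound k M x := hlt.trans_le hb
  exact hmax x ⟨⟨hx0, hlt_x.le, hbis.mono_s11 (nbound_le_of_bound_lt hx0 hlt)⟩, hlt_x⟩

/-- Claim (†): if `x ∼_h x'` for a maximal representative `x'` and `b(x) ≥ h`,
then `b(x') ≥ h`. -/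
theorem maxRepr_bound_ge (k h : ℕ) (hk : h ≤ k) (M : PModel I P) (x x' : M.W)
    (hx' : x' ∈ maxRepr k M) (hbis : Bisim M M h x x')
    (hb : ((h : ℤ) : WithBot ℤ) ≤ bound k M x) :
    ((h : ℤ) : WithBot ℤ) ≤ bound k M x' :=
  maxRepr_bound_ge_general k h M x x' hx' hbis hb
end
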